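/- arXiv:2512.17794 — 2 statements merged into one kernel-verified Lean document; each statement's English description precedes it below -/
import Mathlib

section
/- Fix d ≥ 1, p ∈ (1,∞), α > 0, ε ≥ 0, N ∈ ℕ and a probability measure μ on ℝ^d. Define, for y₁, …, y_N ∈ ℝ^d, f_N(y₁,…,y_N) = (∫₀¹ ∫_{ℝ^d} t^{αp/2 − 1} |(1/N) Σ_{i=1}^N Φ_{t+ε}(x − y_i) − (μ * Φ_{t+ε})(x)|^p dx dt)^{1/p}. Then f_N satisfies the bounded differences property: for every i ∈ {1,…,N} and every y₁,…,y_N, y_i' ∈ ℝ^d, |f_N(y₁,…,y_N) − f_N(y₁,…,y_{i−1}, y_i', y_{i+1},…,y_N)| ≤ (2/N) ‖Φ_ε‖_{𝒲^{−α,p}}. -/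
/-!
Moving the `i`-th sample point from `y` to `z` changes the heat evolution of `μ_N^ε - μ^ε` by
`N⁻¹ (Φ_{t+ε}(· - z) - Φ_{t+ε}(· - y))`. The `𝒲^{-α,p}` norm is the `L^p` norm for the measure
`t^{αp/2-1} dt ⊗ dx` on `(0,1] × ℝ^d`, so Minkowski's inequality and the translation invariance of
Lebesgue measure bound the change of the norm by `2 N⁻¹ ‖Φ_ε‖_{𝒲^{-α,p}}`. The reverse inequality
is the same bound applied to the updated sample, moving its `i`-th point back to `y`.
-/

open MeasureTheory ProbabilityTheory Real Filter
open scoped ENNReal Topology Classical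

noncomputable section

abbrev Esp (d : ℕ) := EuclideanSpace ℝ (Fin d)

/-- The heat kernel on `ℝ^d`. -/
def heatK (d : ℕ) (t : ℝ) (x : Esp d) : ℝ :=
  (4 * π * t) ^ (-(d : ℝ) / 2) * Real.exp (-‖x‖ ^ 2 / (4 * t))

/-- The `𝒲^{-α,p}` norm, applied to the heat evolution `u t = distribution * Φ_t`. -/
def calWNorm (d : ℕ) (α p : ℝ) (u : ℝ → Esp d → ℝ) : ℝ≥0∞ :=
  (∫⁻ t in Set.Ioc (0:ℝ) 1, ENNReal.ofReal (t ^ (α * p / 2 - 1)) *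
      ∫⁻ x, ENNReal.ofReal (|u t x| ^ p)) ^ (1 / p)

/-- Heat evolution of `Φ_ε` (of `δ₀` when `ε = 0`): `Φ_ε * Φ_t = Φ_{t+ε}`. -/
def phiEvol (d : ℕ) (ε : ℝ) : ℝ → Esp d → ℝ := fun t x => heatK d (t + ε) x

/-- Heat evolution of `μ^ε = μ * Φ_ε` (of `μ` when `ε = 0`). -/
def measEvol (d : ℕ) (μ : Measure (Esp d)) (ε : ℝ) : ℝ → Esp d → ℝ :=
  fun t x => ∫ y, heatK d (t + ε) (x - y) ∂μ

/-- Heat evolution of `μ_N^ε` (of the empirical measure `μ_N` when `ε = 0`),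
for the sample `Y 0, …, Y (N-1)`. -/
def empEvol (d N : ℕ) (Y : Fin N → Esp d) (ε : ℝ) : ℝ → Esp d → ℝ :=
  fun t x => (N : ℝ)⁻¹ * ∑ i, heatK d (t + ε) (x - Y i)

/-- Heat evolution of `μ_N^ε - μ^ε`. -/
def empDiff (d N : ℕ) (μ : Measure (Esp d)) (Y : Fin N → Esp d) (ε : ℝ) : ℝ → Esp d → ℝ :=
  fun t x => empEvol d N Y ε t x - measEvol d μ ε t x

theorem Fintype.sum_comp_update {ι α G : Type*} [Fintype ι] [DecidableEq ι] [AddCommGroup G]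
    (g : α → G) (Y : ι → α) (i : ι) (z : α) :
    ∑ j, g (Function.update Y i z j) = ∑ j, g (Y j) + (g z - g (Y i)) := by
  simp only [Function.apply_update (fun _ => g), Finset.sum_update_of_mem (Finset.mem_univ i),
    ← Finset.add_sum_erase _ _ (Finset.mem_univ i), Finset.sdiff_singleton_eq_erase]
  abel

section calWNorm

variable {d : ℕ} {α p : ℝ}

def calWMeasure (d : ℕ) (α p : ℝ) : Measure (ℝ × Esp d) :=
  ((volume.restrict (Set.Ioc 0 1)).withDensity fun t => ENNReal.ofReal (t ^ (α * p / 2 - 1))).prod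
    volume

theorem calWNorm_eq_eLpNorm (hp : 0 < p) {u : ℝ → Esp d → ℝ}
    (hu : Measurable (Function.uncurry u)) :
    calWNorm d α p u = eLpNorm (Function.uncurry u) (ENNReal.ofReal p) (calWMeasure d α p) := by
  have hup : Measurable fun q : ℝ × Esp d => ‖Function.uncurry u q‖ₑ ^ p := hu.enorm.pow_const p
  rw [eLpNorm_eq_lintegral_rpow_enorm_toReal (by simpa using hp) ENNReal.ofReal_ne_top,
    ENNReal.toReal_ofReal hp.le, calWMeasure, lintegral_prod _ hup.aemeasurable,
    lintegral_withDensity_eq_lintegral_mul _ (by fun_prop) hup.lintegral_prod_right']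
  simp only [calWNorm, Pi.mul_apply, Function.uncurry_apply_pair, Real.enorm_eq_ofReal_abs,
    ENNReal.ofReal_rpow_of_nonneg (abs_nonneg _) hp.le]

theorem calWNorm_add_le (hp : 1 ≤ p) {u v : ℝ → Esp d → ℝ}
    (hu : Measurable (Function.uncurry u)) (hv : Measurable (Function.uncurry v)) :
    calWNorm d α p (u + v) ≤ calWNorm d α p u + calWNorm d α p v := by
  have hp₀ : 0 < p := zero_lt_one.trans_le hp
  rw [calWNorm_eq_eLpNorm hp₀ (hu.add hv), calWNorm_eq_eLpNorm hp₀ hu, calWNorm_eq_eLpNorm hp₀ hv]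
  exact eLpNorm_add_le hu.aestronglyMeasurable hv.aestronglyMeasurable (by simpa using hp)

theorem calWNorm_const_mul (hp : 0 < p) (c : ℝ) (u : ℝ → Esp d → ℝ) :
    calWNorm d α p (fun t x => c * u t x) = ENNReal.ofReal |c| * calWNorm d α p u := by
  have hc : ∀ t x, ENNReal.ofReal (|c * u t x| ^ p)
      = ENNReal.ofReal (|c| ^ p) * ENNReal.ofReal (|u t x| ^ p) := fun t x => by
    rw [abs_mul, Real.mul_rpow (abs_nonneg _) (abs_nonneg _), ENNReal.ofReal_mul (by positivity)]
  simp only [calWNorm, hc, lintegral_const_mul' _ _ ENNReal.ofReal_ne_top,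
    mul_left_comm _ (ENNReal.ofReal (|c| ^ p))]
  rw [ENNReal.mul_rpow_of_nonneg _ _ (by positivity),
    ENNReal.ofReal_rpow_of_nonneg (by positivity) (by positivity), ← Real.rpow_mul (abs_nonneg c),
    mul_one_div_cancel hp.ne', Real.rpow_one]

theorem calWNorm_comp_sub (a : Esp d) (u : ℝ → Esp d → ℝ) :
    calWNorm d α p (fun t x => u t (x - a)) = calWNorm d α p u := by
  have hshift (t : ℝ) :
      ∫⁻ x, ENNReal.ofReal (|u t (x - a)| ^ p) = ∫⁻ x, ENNReal.ofReal (|u t x| ^ p) :=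
    lintegral_sub_right_eq_self (fun x => ENNReal.ofReal (|u t x| ^ p)) a
  simp only [calWNorm, hshift]

end calWNorm

theorem measurable_heatK (d : ℕ) : Measurable (Function.uncurry (heatK d)) := by
  unfold heatK Function.uncurry; fun_prop

theorem measurable_phiEvol (d : ℕ) (ε : ℝ) : Measurable (Function.uncurry (phiEvol d ε)) :=
  (measurable_heatK d).comp (measurable_fst.add_const ε |>.prodMk measurable_snd)

theorem Measurable.uncurry_comp_sub {d : ℕ} {u : ℝ → Esp d → ℝ}
    (hu : Measurable (Function.uncurry u)) (a : Esp d) :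
    Measurable (Function.uncurry fun t x => u t (x - a)) :=
  hu.comp (measurable_fst.prodMk (measurable_snd.sub_const a))

theorem measurable_empEvol (d N : ℕ) (Y : Fin N → Esp d) (ε : ℝ) :
    Measurable (Function.uncurry (empEvol d N Y ε)) :=
  measurable_const.mul
    (Finset.measurable_sum _ fun j _ => (measurable_phiEvol d ε).uncurry_comp_sub (Y j))

theorem measurable_measEvol (d : ℕ) (μ : Measure (Esp d)) [SFinite μ] (ε : ℝ) :
    Measurable (Function.uncurry (measEvol d μ ε)) := by
  have hΦ : Measurable fun q : (ℝ × Esp d) × Esp d => phiEvol d ε q.1.1 (q.1.2 - q.2) :=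
    (measurable_phiEvol d ε).comp
      (measurable_fst.fst.prodMk (measurable_fst.snd.sub measurable_snd))
  exact hΦ.stronglyMeasurable.integral_prod_right'.measurable

theorem measurable_empDiff (d N : ℕ) (μ : Measure (Esp d)) [SFinite μ] (Y : Fin N → Esp d)
    (ε : ℝ) : Measurable (Function.uncurry (empDiff d N μ Y ε)) :=
  (measurable_empEvol d N Y ε).sub (measurable_measEvol d μ ε)

theorem empDiff_update (d N : ℕ) (μ : Measure (Esp d)) (Y : Fin N → Esp d) (ε : ℝ) (i : Fin N)
    (z : Esp d) :
    empDiff d N μ (Function.update Y i z) ε = empDiff d N μ Y ε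
      + (fun t x => (N : ℝ)⁻¹ * phiEvol d ε t (x - z))
      + (fun t x => -(N : ℝ)⁻¹ * phiEvol d ε t (x - Y i)) := by
  funext t x
  simp only [empDiff, empEvol, phiEvol, Pi.add_apply,
    Fintype.sum_comp_update (fun y => heatK d (t + ε) (x - y))]
  ring

theorem calWNorm_empDiff_update_le {d N : ℕ} {α p : ℝ} (hp : 1 ≤ p) (μ : Measure (Esp d))
    [SFinite μ] (Y : Fin N → Esp d) (ε : ℝ) (i : Fin N) (z : Esp d) :
    calWNorm d α p (empDiff d N μ (Function.update Y i z) ε) ≤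
      calWNorm d α p (empDiff d N μ Y ε) +
        ENNReal.ofReal (2 / N) * calWNorm d α p (phiEvol d ε) := by
  have hp₀ : 0 < p := zero_lt_one.trans_le hp
  have hY := measurable_empDiff d N μ Y ε
  have hz : Measurable (Function.uncurry fun t x => (N : ℝ)⁻¹ * phiEvol d ε t (x - z)) :=
    ((measurable_phiEvol d ε).uncurry_comp_sub z).const_mul _
  have hYi : Measurable (Function.uncurry fun t x => -(N : ℝ)⁻¹ * phiEvol d ε t (x - Y i)) :=
    ((measurable_phiEvol d ε).uncurry_comp_sub (Y i)).const_mul _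
  have hweight :
      ENNReal.ofReal |(N : ℝ)⁻¹| + ENNReal.ofReal |-(N : ℝ)⁻¹| = ENNReal.ofReal (2 / N) := by
    rw [abs_neg, ← ENNReal.ofReal_add (abs_nonneg _) (abs_nonneg _), abs_of_nonneg (by positivity),
      ← two_mul, div_eq_mul_inv]
  rw [empDiff_update]
  calc _ ≤ _ + _ := calWNorm_add_le hp (hY.add hz) hYi
    _ ≤ _ + _ + _ := by gcongr; exact calWNorm_add_le hp hY hz
    _ = _ := by
      rw [calWNorm_const_mul hp₀ _ fun t x => phiEvol d ε t (x - z),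
        calWNorm_const_mul hp₀ _ fun t x => phiEvol d ε t (x - Y i), calWNorm_comp_sub,
        calWNorm_comp_sub, add_assoc, ← add_mul, hweight]

theorem bounded_differences_calW_general
    (d : ℕ) (p α ε : ℝ) (hp : 1 < p)
    (N : ℕ)
    (μ : Measure (Esp d)) [IsProbabilityMeasure μ]
    (Y : Fin N → Esp d) (i : Fin N) (z : Esp d) :
    calWNorm d α p (empDiff d N μ (Function.update Y i z) ε) ≤
        calWNorm d α p (empDiff d N μ Y ε) +
          ENNReal.ofReal (2 / N) * calWNorm d α p (phiEvol d ε) ∧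
    calWNorm d α p (empDiff d N μ Y ε) ≤
        calWNorm d α p (empDiff d N μ (Function.update Y i z) ε) +
          ENNReal.ofReal (2 / N) * calWNorm d α p (phiEvol d ε) := by
  refine ⟨calWNorm_empDiff_update_le hp.le μ Y ε i z, ?_⟩
  simpa using calWNorm_empDiff_update_le hp.le μ (Function.update Y i z) ε i (Y i)

/-- The bounded differences property of
`f_N(y₁,…,y_N) = ‖μ_N^ε - μ^ε‖_{𝒲^{-α,p}}` (stated as the two one-sided inequalities,
which together express `|f_N(y) - f_N(y')| ≤ (2/N)‖Φ_ε‖_{𝒲^{-α,p}}`). -/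
theorem bounded_differences_calW
    (d : ℕ) (hd : 1 ≤ d) (p α ε : ℝ) (hp : 1 < p) (hα : 0 < α) (hε : 0 ≤ ε)
    (N : ℕ) (hN : 0 < N)
    (μ : Measure (Esp d)) [IsProbabilityMeasure μ]
    (Y : Fin N → Esp d) (i : Fin N) (z : Esp d) :
    calWNorm d α p (empDiff d N μ (Function.update Y i z) ε) ≤
        calWNorm d α p (empDiff d N μ Y ε) +
          ENNReal.ofReal (2 / N) * calWNorm d α p (phiEvol d ε) ∧
    calWNorm d α p (empDiff d N μ Y ε) ≤
        calWNorm d α p (empDiff d N μ (Function.update Y i z) ε) +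
          ENNReal.ofReal (2 / N) * calWNorm d α p (phiEvol d ε) :=
  bounded_differences_calW_general d p α ε hp N μ Y i z

end
end

section
/- For every dimension d ≥ 1, every p ∈ (1,∞) with Hölder conjugate q = p/(p−1), every α > 0 and every ε > 0, the heat kernel satisfies the exact identity ‖Φ_ε‖_{𝒲^{−α,p}} = ε^{(α − d/q)/2} · p^{−d/(2p)} (4π)^{−d/(2q)} · 𝓑₀(ε, α, p, d)^{1/p}, where 𝓑₀(ε, α, p, d) = ∫₀^{1/ε} s^{αp/2 − 1} (1+s)^{−(p−1)d/2} ds. -/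
open MeasureTheory ProbabilityTheory Real Filter
open scoped ENNReal Topology Classical

noncomputable section

/-!
The heat kernel is a Gaussian, so `|Φ_T|^p` is again a Gaussian and its `L^p` mass is explicit:
`‖Φ_T‖_p^p = p^{-d/2} (4πT)^{-(p-1)d/2}`. Since `Φ_ε * Φ_t = Φ_{t+ε}`, the norm reduces to the
one-dimensional integral `∫₀¹ t^{αp/2-1} (t+ε)^{-(p-1)d/2} dt`, and the substitution `t = ε s`
pulls out the power of `ε` and leaves `𝓑₀`.
-/

lemma heatK_pos (d : ℕ) {T : ℝ} (hT : 0 < T) (x : Esp d) : 0 < heatK d T x := by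
  unfold heatK; positivity

lemma abs_heatK_rpow (d : ℕ) {p T : ℝ} (hT : 0 < T) (x : Esp d) :
    |heatK d T x| ^ p = (4 * π * T) ^ (-(d : ℝ) * p / 2) * rexp (-(p / (4 * T)) * ‖x‖ ^ 2) := by
  have h4T : 0 < 4 * π * T := by positivity
  rw [abs_of_pos (heatK_pos d hT x), heatK, mul_rpow (by positivity) (exp_pos _).le,
    ← rpow_mul h4T.le, ← exp_mul]
  congr 2 <;> ring

lemma integrable_exp_neg_mul_norm_sq {V : Type*} [NormedAddCommGroup V] [InnerProductSpace ℝ V]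
    [FiniteDimensional ℝ V] [MeasurableSpace V] [BorelSpace V] {b : ℝ} (hb : 0 < b) :
    Integrable (fun v : V => rexp (-b * ‖v‖ ^ 2)) :=
  .of_integral_ne_zero <| by
    rw [GaussianFourier.integral_rexp_neg_mul_sq_norm hb]; positivity

lemma lintegral_abs_heatK_rpow (d : ℕ) {p T : ℝ} (hp : 0 < p) (hT : 0 < T) :
    ∫⁻ x : Esp d, ENNReal.ofReal (|heatK d T x| ^ p) =
      ENNReal.ofReal (p ^ (-(d : ℝ) / 2) * (4 * π * T) ^ (-((p - 1) * d / 2))) := by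
  have h4T : 0 < 4 * π * T := by positivity
  have hb : 0 < p / (4 * T) := by positivity
  simp_rw [abs_heatK_rpow d hT]
  rw [← ofReal_integral_eq_lintegral_ofReal ((integrable_exp_neg_mul_norm_sq hb).const_mul _)
    (ae_of_all _ fun x => by positivity), integral_const_mul,
    GaussianFourier.integral_rexp_neg_mul_sq_norm hb, finrank_euclideanSpace_fin,
    show π / (p / (4 * T)) = 4 * π * T / p by field_simp, div_rpow h4T.le hp.le,
    ← mul_div_assoc, ← rpow_add h4T, div_eq_mul_inv, ← rpow_neg hp.le, mul_comm]
  congr 3 <;> ring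

lemma integrableOn_rpow_mul_add_rpow {m e ε b : ℝ} (hm : -1 < m) (he : e ≤ 0) (hε : 0 < ε) :
    IntegrableOn (fun t : ℝ => t ^ m * (t + ε) ^ e) (Set.Ioc 0 b) := by
  have hpow : IntegrableOn (fun t : ℝ => t ^ m) (Set.Ioc 0 b) :=
    (intervalIntegral.intervalIntegrable_rpow' hm).1
  refine (hpow.mul_const (ε ^ e)).mono' ?_ ?_
  · refine (ContinuousOn.mul ?_ ?_).aestronglyMeasurable measurableSet_Ioc
    · exact continuousOn_id.rpow_const fun t ht => .inl ht.1.ne'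
    · exact (continuousOn_id.add continuousOn_const).rpow_const fun t ht =>
        .inl (add_pos ht.1 hε).ne'
  · filter_upwards [ae_restrict_mem measurableSet_Ioc] with t ht
    rw [norm_of_nonneg (by have := ht.1; positivity)]
    exact mul_le_mul_of_nonneg_left (rpow_le_rpow_of_nonpos hε (by linarith [ht.1]) he)
      (rpow_nonneg ht.1.le m)

lemma setIntegral_Ioc_rpow_mul_add_rpow {m e ε b : ℝ} (hε : 0 < ε) (hb : 0 ≤ b) :
    ∫ t in Set.Ioc 0 b, t ^ m * (t + ε) ^ e =
      ε ^ (m + e + 1) * ∫ s in Set.Ioc 0 (b / ε), s ^ m * (1 + s) ^ e := by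
  have hsubst := intervalIntegral.integral_comp_mul_left
    (fun t => t ^ m * (t + ε) ^ e) hε.ne' (a := 0) (b := b / ε)
  rw [mul_zero, mul_div_cancel₀ b hε.ne', smul_eq_mul, eq_inv_mul_iff_mul_eq₀ hε.ne'] at hsubst
  have hscale : ∀ s ∈ Set.Ioc 0 (b / ε),
      (ε * s) ^ m * (ε * s + ε) ^ e = ε ^ (m + e) * (s ^ m * (1 + s) ^ e) := by
    intro s hs
    rw [show ε * s + ε = ε * (1 + s) by ring, mul_rpow hε.le hs.1.le,
      mul_rpow hε.le (by linarith [hs.1]), rpow_add hε]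
    ring
  rw [← intervalIntegral.integral_of_le hb, ← hsubst,
    intervalIntegral.integral_of_le (by positivity), setIntegral_congr_fun measurableSet_Ioc hscale,
    integral_const_mul, rpow_add_one hε.ne']
  ring

lemma calWNorm_phiEvol (d : ℕ) {p α ε : ℝ} (hp : 1 ≤ p) (hα : 0 < α) (hε : 0 < ε) :
    calWNorm d α p (phiEvol d ε) =
      ENNReal.ofReal (p ^ (-(d : ℝ) / 2) * (4 * π) ^ (-((p - 1) * d / 2)) *
        ∫ t in Set.Ioc 0 1, t ^ (α * p / 2 - 1) * (t + ε) ^ (-((p - 1) * d / 2))) ^ (1 / p) := by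
  have hint : IntegrableOn (fun t : ℝ => t ^ (α * p / 2 - 1) * (t + ε) ^ (-((p - 1) * d / 2)))
      (Set.Ioc 0 1) :=
    integrableOn_rpow_mul_add_rpow (by nlinarith) (by nlinarith [(d.cast_nonneg : (0 : ℝ) ≤ d)]) hε
  rw [calWNorm, ← integral_const_mul, ofReal_integral_eq_lintegral_ofReal (hint.const_mul _)
    ((ae_restrict_mem measurableSet_Ioc).mono fun t ht => by have := ht.1; positivity)]
  congr 1
  refine setLIntegral_congr_fun measurableSet_Ioc fun t ht => ?_
  simp only [phiEvol]
  rw [lintegral_abs_heatK_rpow d (by linarith) (by linarith [ht.1]),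
    ← ENNReal.ofReal_mul (rpow_nonneg ht.1.le _), mul_rpow (by positivity) (by linarith [ht.1])]
  ring_nf

theorem calWNorm_heat_kernel_eq_general
    (d : ℕ) (p α ε : ℝ) (hp : 1 < p) (hα : 0 < α) (hε : 0 < ε) :
    calWNorm d α p (phiEvol d ε) =
      ENNReal.ofReal (ε ^ ((α - (d : ℝ) / (p / (p - 1))) / 2) *
        (p ^ (-(d : ℝ) / (2 * p)) * (4 * π) ^ (-(d : ℝ) / (2 * (p / (p - 1))))) *
        (∫ s in Set.Ioc (0 : ℝ) (1 / ε),
            s ^ (α * p / 2 - 1) * (1 + s) ^ (-((p - 1) * (d : ℝ) / 2))) ^ (1 / p)) := by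
  have hp0 : 0 < p := by linarith
  set B := ∫ s in Set.Ioc (0 : ℝ) (1 / ε),
    s ^ (α * p / 2 - 1) * (1 + s) ^ (-((p - 1) * (d : ℝ) / 2))
  have hB : 0 ≤ B := setIntegral_nonneg measurableSet_Ioc fun s hs => by have := hs.1; positivity
  rw [calWNorm_phiEvol d hp.le hα hε, setIntegral_Ioc_rpow_mul_add_rpow hε zero_le_one,
    ENNReal.ofReal_rpow_of_nonneg (by positivity) (by positivity)]
  congr 1
  rw [mul_rpow (by positivity) (by positivity), mul_rpow (by positivity) hB,
    mul_rpow (by positivity) (by positivity), ← rpow_mul hp0.le, ← rpow_mul (by positivity),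
    ← rpow_mul hε.le]
  have hp1 : p - 1 ≠ 0 := by linarith
  have hexp_p : -(d : ℝ) / 2 * (1 / p) = -d / (2 * p) := by field_simp
  have hexp_4π : -((p - 1) * d / 2) * (1 / p) = -(d : ℝ) / (2 * (p / (p - 1))) := by
    field_simp
  have hexp_ε : (α * p / 2 - 1 + -((p - 1) * d / 2) + 1) * (1 / p) =
      (α - (d : ℝ) / (p / (p - 1))) / 2 := by
    field_simp
    ring
  rw [hexp_p, hexp_4π, hexp_ε]
  ring

/-- Exact formula for `‖Φ_ε‖_{𝒲^{-α,p}}`. -/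
theorem calWNorm_heat_kernel_eq
    (d : ℕ) (hd : 1 ≤ d) (p α ε : ℝ) (hp : 1 < p) (hα : 0 < α) (hε : 0 < ε) :
    calWNorm d α p (phiEvol d ε) =
      ENNReal.ofReal (ε ^ ((α - (d : ℝ) / (p / (p - 1))) / 2) *
        (p ^ (-(d : ℝ) / (2 * p)) * (4 * π) ^ (-(d : ℝ) / (2 * (p / (p - 1))))) *
        (∫ s in Set.Ioc (0 : ℝ) (1 / ε),
            s ^ (α * p / 2 - 1) * (1 + s) ^ (-((p - 1) * (d : ℝ) / 2))) ^ (1 / p)) :=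
  calWNorm_heat_kernel_eq_general d p α ε hp hα hε

end
end
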